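/- arXiv:2004.14241 — 2 statements merged into one kernel-verified Lean document; each statement's English description precedes it below -/
import Mathlib

section
/- (Construction D.) Let q be a prime power, d an even integer with 2 ≤ d ≤ 2k, and Δ an integer with k ≤ Δ < n. If there exists an (n−Δ, N, d, k)_q constant dimension code, then there exists an (n, q^{Δ(k−d/2+1)}·N, d, k)_q constant dimension code all of whose codewords U satisfy dim(π_{n−Δ}(U)) = k, where π_{n−Δ} is the projection of 𝔽_q^n onto the first n−Δ coordinates (equivalently, all identifying vectors of the codewords have their k ones among the first n−Δ positions). -/
/-- Projection of `F^n` onto the first `i` coordinates (realized as the linear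
endomorphism of `F^n` that zeroes out all coordinates with index `≥ i`). -/
def zeroProj (F : Type*) [Field F] (n i : ℕ) : (Fin n → F) →ₗ[F] (Fin n → F) where
  toFun x := fun j => if (j : ℕ) < i then x j else 0
  map_add' x y := by
    funext j; by_cases h : (j : ℕ) < i <;> simp [h]
  map_smul' c x := by
    funext j; by_cases h : (j : ℕ) < i <;> simp [h]

/-- `projDim F U i = dim π_i(U)`, the dimension of the projection of `U` onto the
first `i` coordinates. -/
noncomputable def projDim (F : Type*) [Field F] {n : ℕ} (U : Submodule F (Fin n → F))
    (i : ℕ) : ℕ :=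
  Module.finrank F ↥(U.map (zeroProj F n i))

/-- Subspace distance `d_S(U,W) = dim U + dim W - 2 dim (U ∩ W)`. -/
noncomputable def subspaceDist (F : Type*) [Field F] {n : ℕ}
    (U W : Submodule F (Fin n → F)) : ℕ :=
  Module.finrank F ↥U + Module.finrank F ↥W - 2 * Module.finrank F ↥(U ⊓ W)

/-!
Each codeword `U` of the short code, given by an injective `j_U : 𝔽_q^k → 𝔽_q^(n-Δ)` with image
`U`, is lifted to the row spaces of the block matrices `[j_U | A]`, where `A` runs over a Gabidulin
code: `q^(Δ(k-δ+1))` maps `𝔽_q^k → 𝔽_q^Δ` whose pairwise differences have rank at least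
`δ = d/2`. Two lifts of the same `U` meet in the image of `ker (A - B)`, so their distance is
`2 rank (A - B) ≥ d`; lifts of different `U ≠ W` meet in a space projecting injectively into
`U ⊓ W`, so their distance is at least `d_S(U, W) ≥ d`.

The Gabidulin code consists of the `q`-linearized polynomials `x ↦ ∑_{i ≤ k-δ} aᵢ x^(q^i)` on
`𝔽_(q^Δ) ≅ 𝔽_q^Δ`, restricted to a `k`-dimensional subspace: a nonzero one has at most
`q^(k-δ)` roots, so its kernel has dimension at most `k - δ`.
-/

open Polynomial Module LinearMap

section LinearizedPoly
variable {R : Type*} [Semiring R] (q : ℕ) {r : ℕ}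

noncomputable def linearizedPoly (a : Fin r → R) : R[X] :=
  ∑ i, C (a i) * X ^ q ^ (i : ℕ)

theorem coeff_linearizedPoly (hq : 1 < q) (a : Fin r → R) (i : Fin r) :
    (linearizedPoly q a).coeff (q ^ (i : ℕ)) = a i := by
  rw [linearizedPoly, finsetSum_coeff, Finset.sum_eq_single i]
  · simp
  · intro j _ hji
    rw [coeff_C_mul, coeff_X_pow, if_neg, mul_zero]
    exact fun h => hji (Fin.ext (Nat.pow_right_injective hq h).symm)
  · simp

theorem linearizedPoly_ne_zero (hq : 1 < q) {a : Fin r → R} (ha : a ≠ 0) :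
    linearizedPoly q a ≠ 0 := by
  obtain ⟨i, hi⟩ := Function.ne_iff.mp ha
  exact fun h => hi (by rw [← coeff_linearizedPoly q hq a i, h, coeff_zero, Pi.zero_apply])

theorem natDegree_linearizedPoly_le (hq : 0 < q) (a : Fin r → R) :
    (linearizedPoly q a).natDegree ≤ q ^ (r - 1) := by
  refine natDegree_sum_le_of_forall_le _ _ fun i _ => (natDegree_C_mul_le _ _).trans ?_
  exact (natDegree_X_pow_le _).trans (Nat.pow_le_pow_right hq (by omega))

end LinearizedPoly

section LinearizedMap
variable (F : Type*) {E : Type*} [Field F] [Fintype F] [Field E] [Algebra F E] {r : ℕ}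

noncomputable def linearizedMap (a : Fin r → E) : E →ₗ[F] E :=
  ∑ i, a i • (FiniteField.frobeniusAlgHom F E ^ (i : ℕ)).toLinearMap

theorem linearizedMap_sub (a b : Fin r → E) :
    linearizedMap F (a - b) = linearizedMap F a - linearizedMap F b := by
  ext x
  simp [linearizedMap, sub_mul]

theorem eval_linearizedPoly (a : Fin r → E) (x : E) :
    (linearizedPoly (Fintype.card F) a).eval x = linearizedMap F a x := by
  simp [linearizedPoly, linearizedMap, eval_finsetSum, AlgHom.coe_pow,
    FiniteField.coe_frobeniusAlgHom, pow_iterate]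

theorem card_ker_linearizedMap_lt [Finite E] {a : Fin r → E} (ha : a ≠ 0) :
    Nat.card (ker (linearizedMap F a)) < Fintype.card F ^ r := by
  have hq : 1 < Fintype.card F := Fintype.one_lt_card
  have hP := linearizedPoly_ne_zero _ hq ha
  have hr : 0 < r := by
    by_contra h0
    exact ha (funext fun i => absurd i.isLt (by omega))
  calc Nat.card (ker (linearizedMap F a))
      = (ker (linearizedMap F a) : Set E).ncard := Nat.card_coe_set_eq _
    _ ≤ ((linearizedPoly (Fintype.card F) a).rootSet E).ncard := by
        refine Set.ncard_le_ncard fun x hx => ?_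
        rw [mem_rootSet_of_ne hP, coe_aeval_eq_eval, eval_linearizedPoly]
        exact hx
    _ ≤ (linearizedPoly (Fintype.card F) a).natDegree := ncard_rootSet_le _ _
    _ ≤ Fintype.card F ^ (r - 1) := natDegree_linearizedPoly_le _ (by omega) a
    _ < Fintype.card F ^ r := Nat.pow_lt_pow_right hq (by omega)

theorem finrank_ker_linearizedMap_comp_lt [Finite E] {V : Type*} [AddCommGroup V] [Module F V]
    [FiniteDimensional F V] {ι : V →ₗ[F] E} (hι : Function.Injective ι) {a : Fin r → E}
    (ha : a ≠ 0) : finrank F (ker (linearizedMap F a ∘ₗ ι)) < r := by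
  have hmaps (x : V) (hx : x ∈ ker (linearizedMap F a ∘ₗ ι)) : ι x ∈ ker (linearizedMap F a) := hx
  have hinj : Function.Injective fun x : ker (linearizedMap F a ∘ₗ ι) =>
      (⟨ι x, hmaps x x.2⟩ : ker (linearizedMap F a)) :=
    fun x y h => Subtype.ext (hι (congrArg Subtype.val h))
  have := (Nat.card_le_card_of_injective _ hinj).trans_lt (card_ker_linearizedMap_lt F ha)
  rwa [natCard_eq_pow_finrank (K := F), Nat.card_eq_fintype_card,
    Nat.pow_lt_pow_iff_right Fintype.one_lt_card] at this

end LinearizedMap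

section Gabidulin
variable (F : Type*) [Field F] [Fintype F]

theorem exists_gabidulinCode {k Δ δ : ℕ} (hδ : 0 < δ) (hδk : δ ≤ k) (hkΔ : k ≤ Δ) :
    ∃ D : Finset ((Fin k → F) →ₗ[F] (Fin Δ → F)),
      D.card = Fintype.card F ^ (Δ * (k - δ + 1)) ∧
      ∀ A ∈ D, ∀ B ∈ D, A ≠ B → δ ≤ finrank F (range (A - B)) := by
  classical
  have : NeZero Δ := ⟨by omega⟩
  have : Fact (ringChar F).Prime := ⟨CharP.char_is_prime F _⟩
  let E := FiniteField.Extension F (ringChar F) Δ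
  have : Fintype E := Fintype.ofFinite E
  let b : Basis (Fin Δ) F E :=
    Module.finBasisOfFinrankEq F E (FiniteField.finrank_extension F _ Δ)
  let ι : (Fin k → F) →ₗ[F] E :=
    b.equivFun.symm.toLinearMap ∘ₗ Function.ExtendByZero.linearMap F (Fin.castLE hkΔ)
  have hι : Function.Injective ι :=
    b.equivFun.symm.injective.comp (Function.extend_injective (Fin.castLE_injective hkΔ) 0)
  let code (a : Fin (k - δ + 1) → E) : (Fin k → F) →ₗ[F] (Fin Δ → F) :=
    b.equivFun.toLinearMap ∘ₗ linearizedMap F a ∘ₗ ι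
  have code_sub (a a' : Fin (k - δ + 1) → E) : code a - code a' = code (a - a') := by
    simp only [code, linearizedMap_sub, LinearMap.sub_comp, LinearMap.comp_sub]
  have le_finrank_range (a) (ha : a ≠ 0) : δ ≤ finrank F (range (code a)) := by
    have := finrank_range_add_finrank_ker (code a)
    have hker : ker (code a) = ker (linearizedMap F a ∘ₗ ι) := LinearEquiv.ker_comp _ _
    have := finrank_ker_linearizedMap_comp_lt F hι ha
    rw [← hker] at this
    simp only [finrank_pi, Fintype.card_fin] at *
    omega
  have code_injective : Function.Injective code := fun a a' h => by
    by_contra hne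
    have := le_finrank_range (a - a') (sub_ne_zero.mpr hne)
    rw [← code_sub, h, sub_self, range_zero, finrank_bot] at this
    omega
  refine ⟨Finset.univ.image code, ?_, ?_⟩
  · rw [Finset.card_image_of_injective _ code_injective, Finset.card_univ, Fintype.card_fun,
      Fintype.card_fin, Fintype.card_eq_nat_card, FiniteField.natCard_extension,
      Nat.card_eq_fintype_card, ← pow_mul]
  · simp only [Finset.mem_image, Finset.mem_univ, true_and]
    rintro _ ⟨a, rfl⟩ _ ⟨a', rfl⟩ hne
    rw [code_sub]
    exact le_finrank_range _ (sub_ne_zero.mpr fun h => hne (h ▸ rfl))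

end Gabidulin

section RangeProd
variable {K V V' W₁ W₂ : Type*} [Field K] [AddCommGroup V] [Module K V]
  [AddCommGroup V'] [Module K V'] [AddCommGroup W₁] [Module K W₁] [AddCommGroup W₂] [Module K W₂]
  {f : V →ₗ[K] W₁}

theorem LinearMap.prod_injective_of_left (hf : Function.Injective f) (g : V →ₗ[K] W₂) :
    Function.Injective (f.prod g) :=
  fun _ _ h => hf (congrArg Prod.fst h)

theorem LinearMap.map_fst_range_prod (f : V →ₗ[K] W₁) (g : V →ₗ[K] W₂) :
    (range (f.prod g)).map (fst K W₁ W₂) = range f := by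
  rw [← range_comp, fst_prod]

theorem LinearMap.range_prod_inf_range_prod (hf : Function.Injective f) (g g' : V →ₗ[K] W₂) :
    range (f.prod g) ⊓ range (f.prod g') = (ker (g - g')).map (f.prod g) := by
  apply le_antisymm
  · rintro _ ⟨⟨x, rfl⟩, ⟨y, hy⟩⟩
    obtain rfl : y = x := hf (congrArg Prod.fst hy)
    exact ⟨y, by simpa [sub_eq_zero] using (congrArg Prod.snd hy).symm, rfl⟩
  · rintro _ ⟨x, hx, rfl⟩
    refine ⟨⟨x, rfl⟩, ⟨x, ?_⟩⟩
    simpa [sub_eq_zero] using (sub_eq_zero.mp hx).symm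

theorem LinearMap.eq_of_range_prod_eq (hf : Function.Injective f) {g g' : V →ₗ[K] W₂}
    (h : range (f.prod g) = range (f.prod g')) : g = g' := by
  ext x
  obtain ⟨y, hy⟩ : (f x, g x) ∈ range (f.prod g') := h ▸ ⟨x, rfl⟩
  obtain rfl : y = x := hf (congrArg Prod.fst hy)
  exact (congrArg Prod.snd hy).symm

theorem LinearMap.finrank_range_prod_inf_le [FiniteDimensional K W₁] (hf : Function.Injective f)
    (f' : V' →ₗ[K] W₁) (g : V →ₗ[K] W₂) (g' : V' →ₗ[K] W₂) :
    finrank K ↥(range (f.prod g) ⊓ range (f'.prod g')) ≤ finrank K ↥(range f ⊓ range f') := by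
  set P := (range (f.prod g) ⊓ range (f'.prod g')).comap (f.prod g)
  have hP : P.map (f.prod g) = range (f.prod g) ⊓ range (f'.prod g') := by
    rw [Submodule.map_comap_eq, ← inf_assoc, inf_idem]
  have hPf : P.map f ≤ range f ⊓ range f' := by
    have : P.map f = (P.map (f.prod g)).map (fst K W₁ W₂) := by
      rw [← Submodule.map_comp, fst_prod]
    rw [this, hP, ← map_fst_range_prod f g, ← map_fst_range_prod f' g']
    exact le_inf (Submodule.map_mono inf_le_left) (Submodule.map_mono inf_le_right)
  calc finrank K ↥(range (f.prod g) ⊓ range (f'.prod g'))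
      = finrank K P := by
        rw [← hP]; exact (P.equivMapOfInjective _ (prod_injective_of_left hf g)).finrank_eq.symm
    _ = finrank K ↥(P.map f) := (P.equivMapOfInjective f hf).finrank_eq
    _ ≤ finrank K ↥(range f ⊓ range f') := Submodule.finrank_mono hPf

end RangeProd

section Lifting
variable {K : Type*} [Field K] {m Δ k : ℕ}

variable (K m Δ) in
noncomputable def finAppendEquiv : ((Fin m → K) × (Fin Δ → K)) ≃ₗ[K] (Fin (m + Δ) → K) :=
  (LinearEquiv.sumArrowLequivProdArrow (Fin m) (Fin Δ) K K).symm.trans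
    (LinearEquiv.funCongrLeft K K finSumFinEquiv.symm)

theorem zeroProj_comp_finAppendEquiv :
    zeroProj K (m + Δ) m ∘ₗ (finAppendEquiv K m Δ).toLinearMap =
      (finAppendEquiv K m Δ).toLinearMap ∘ₗ inl K _ _ ∘ₗ fst K _ _ := by
  refine LinearMap.ext fun ⟨x, y⟩ => funext fun i => ?_
  refine Fin.addCases (fun i => ?_) (fun i => ?_) i <;> simp [finAppendEquiv, zeroProj]

noncomputable def liftedSubspace (j : (Fin k → K) →ₗ[K] (Fin m → K))
    (A : (Fin k → K) →ₗ[K] (Fin Δ → K)) : Submodule K (Fin (m + Δ) → K) :=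
  (range (j.prod A)).map (finAppendEquiv K m Δ).toLinearMap

variable {j j' : (Fin k → K) →ₗ[K] (Fin m → K)} (A B : (Fin k → K) →ₗ[K] (Fin Δ → K))

theorem finrank_liftedSubspace (hj : Function.Injective j) :
    finrank K ↥(liftedSubspace j A) = k := by
  rw [liftedSubspace, LinearEquiv.finrank_map_eq,
    finrank_range_of_inj (prod_injective_of_left hj A), finrank_fin_fun]

theorem projDim_liftedSubspace (hj : Function.Injective j) :
    projDim K (liftedSubspace j A) m = k := by
  rw [projDim, liftedSubspace, ← Submodule.map_comp, zeroProj_comp_finAppendEquiv,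
    Submodule.map_comp, LinearEquiv.finrank_map_eq, Submodule.map_comp, map_fst_range_prod,
    ← (Submodule.equivMapOfInjective _ (inl_injective (R := K)) _).finrank_eq,
    finrank_range_of_inj hj, finrank_fin_fun]

theorem range_eq_of_liftedSubspace_eq (h : liftedSubspace j A = liftedSubspace j' B) :
    range j = range j' := by
  have h' := congrArg (fun S => (S.comap (finAppendEquiv K m Δ).toLinearMap).map (fst K _ _)) h
  simpa [liftedSubspace, Submodule.comap_map_eq_of_injective (finAppendEquiv K m Δ).injective,
    map_fst_range_prod] using h'

theorem eq_of_liftedSubspace_eq (hj : Function.Injective j)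
    (h : liftedSubspace j A = liftedSubspace j B) : A = B :=
  eq_of_range_prod_eq hj (Submodule.map_injective_of_injective (finAppendEquiv K m Δ).injective h)

theorem liftedSubspace_inf :
    liftedSubspace j A ⊓ liftedSubspace j' B =
      (range (j.prod A) ⊓ range (j'.prod B)).map (finAppendEquiv K m Δ).toLinearMap :=
  (Submodule.map_inf _ (finAppendEquiv K m Δ).injective).symm

theorem subspaceDist_liftedSubspace (hj : Function.Injective j) :
    subspaceDist K (liftedSubspace j A) (liftedSubspace j B) = 2 * finrank K (range (A - B)) := by
  have hker : finrank K ↥(liftedSubspace j A ⊓ liftedSubspace j B) = finrank K (ker (A - B)) := by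
    rw [liftedSubspace_inf, LinearEquiv.finrank_map_eq, range_prod_inf_range_prod hj,
      ← (Submodule.equivMapOfInjective _ (prod_injective_of_left hj A) _).finrank_eq]
  have := finrank_range_add_finrank_ker (A - B)
  rw [finrank_fin_fun] at this
  rw [subspaceDist, finrank_liftedSubspace A hj, finrank_liftedSubspace B hj, hker]
  omega

theorem subspaceDist_range_le_subspaceDist_liftedSubspace (hj : Function.Injective j)
    (hj' : Function.Injective j') :
    subspaceDist K (range j) (range j') ≤
      subspaceDist K (liftedSubspace j A) (liftedSubspace j' B) := by
  have hinf := finrank_range_prod_inf_le hj j' A B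
  rw [← LinearEquiv.finrank_map_eq (finAppendEquiv K m Δ), ← liftedSubspace_inf] at hinf
  rw [subspaceDist, subspaceDist, finrank_liftedSubspace A hj, finrank_liftedSubspace B hj',
    finrank_range_of_inj hj, finrank_range_of_inj hj', finrank_fin_fun]
  omega

end Lifting

theorem Submodule.exists_injective_range_eq {K V : Type*} [Field K] [AddCommGroup V] [Module K V]
    {k : ℕ} (U : Submodule K V) [FiniteDimensional K U] (hU : finrank K U = k) :
    ∃ j : (Fin k → K) →ₗ[K] V, Function.Injective j ∧ range j = U :=
  ⟨U.subtype ∘ₗ (LinearEquiv.ofFinrankEq _ _ (by simp [hU])).toLinearMap,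
    U.injective_subtype.comp (LinearEquiv.injective _), by
      rw [range_comp, LinearEquiv.range, Submodule.map_top, Submodule.range_subtype]⟩

theorem exists_liftedCode {K : Type*} [Field K] {m Δ k d : ℕ}
    (C : Finset (Submodule K (Fin m → K))) (hC_finrank : ∀ U ∈ C, finrank K U = k)
    (hC_dist : ∀ U ∈ C, ∀ W ∈ C, U ≠ W → d ≤ subspaceDist K U W)
    (D : Finset ((Fin k → K) →ₗ[K] (Fin Δ → K)))
    (hD_dist : ∀ A ∈ D, ∀ B ∈ D, A ≠ B → d ≤ 2 * finrank K (range (A - B))) :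
    ∃ C' : Finset (Submodule K (Fin (m + Δ) → K)), C'.card = C.card * D.card ∧
      (∀ U ∈ C', finrank K U = k) ∧
      (∀ U ∈ C', ∀ W ∈ C', U ≠ W → d ≤ subspaceDist K U W) ∧
      ∀ U ∈ C', projDim K U m = k := by
  classical
  choose! j hj using fun U hU => Submodule.exists_injective_range_eq U (hC_finrank U hU)
  let lift (p : Submodule K (Fin m → K) × ((Fin k → K) →ₗ[K] (Fin Δ → K))) :=
    liftedSubspace (j p.1) p.2
  have lift_injOn : Set.InjOn lift (C ×ˢ D) := by
    rintro ⟨U, A⟩ ⟨hU, -⟩ ⟨W, B⟩ ⟨hW, -⟩ h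
    have hUW : U = W := by
      rw [← (hj U hU).2, ← (hj W hW).2]
      exact range_eq_of_liftedSubspace_eq A B h
    subst hUW
    exact Prod.ext rfl (eq_of_liftedSubspace_eq A B (hj U hU).1 h)
  refine ⟨(C ×ˢ D).image lift, ?_, ?_, ?_, ?_⟩
  · rw [Finset.card_image_of_injOn (by simpa using lift_injOn), Finset.card_product]
  · simp only [Finset.mem_image, Finset.mem_product]
    rintro _ ⟨⟨U, A⟩, ⟨hU, -⟩, rfl⟩
    exact finrank_liftedSubspace A (hj U hU).1
  · simp only [Finset.mem_image, Finset.mem_product]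
    rintro _ ⟨⟨U, A⟩, ⟨hU, hA⟩, rfl⟩ _ ⟨⟨W, B⟩, ⟨hW, hB⟩, rfl⟩ hne
    by_cases hUW : U = W
    · subst hUW
      have hAB : A ≠ B := fun h => hne (h ▸ rfl)
      exact (hD_dist A hA B hB hAB).trans_eq (subspaceDist_liftedSubspace A B (hj U hU).1).symm
    · have := subspaceDist_range_le_subspaceDist_liftedSubspace A B (hj U hU).1 (hj W hW).1
      rw [(hj U hU).2, (hj W hW).2] at this
      exact (hC_dist U hU W hW hUW).trans this
  · simp only [Finset.mem_image, Finset.mem_product]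
    rintro _ ⟨⟨U, A⟩, ⟨hU, -⟩, rfl⟩
    exact projDim_liftedSubspace A (hj U hU).1

theorem statement5_general (q n k d Δ N : ℕ)
    (hd : 2 ≤ d) (hdk : d ≤ 2 * k) (hde : Even d)
    (hkΔ : k ≤ Δ) (hΔn : Δ < n)
    (F : Type*) [Field F] [Fintype F] (hF : Fintype.card F = q)
    (h : ∃ C : Finset (Submodule F (Fin (n - Δ) → F)),
      C.card = N ∧
      (∀ U ∈ C, Module.finrank F ↥U = k) ∧
      (∀ U ∈ C, ∀ W ∈ C, U ≠ W → d ≤ subspaceDist F U W)) :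
    ∃ C : Finset (Submodule F (Fin n → F)),
      C.card = q ^ (Δ * (k - d / 2 + 1)) * N ∧
      (∀ U ∈ C, Module.finrank F ↥U = k) ∧
      (∀ U ∈ C, ∀ W ∈ C, U ≠ W → d ≤ subspaceDist F U W) ∧
      (∀ U ∈ C, projDim F U (n - Δ) = k) := by
  obtain ⟨m, rfl⟩ := Nat.exists_eq_add_of_le' hΔn.le
  rw [Nat.add_sub_cancel] at h ⊢
  obtain ⟨C, hC_card, hC_finrank, hC_dist⟩ := h
  obtain ⟨δ, rfl⟩ := hde
  obtain ⟨D, hD_card, hD_rank⟩ := exists_gabidulinCode F (δ := δ) (by omega) (by omega) hkΔ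
  obtain ⟨C', hC'_card, hC'⟩ := exists_liftedCode C hC_finrank hC_dist D
    fun A hA B hB hAB => by have := hD_rank A hA B hB hAB; omega
  refine ⟨C', ?_, hC'⟩
  rw [hC'_card, hC_card, hD_card, hF, show (δ + δ) / 2 = δ by omega, mul_comm]

theorem statement5 (q n k d Δ N : ℕ) (hq : IsPrimePow q)
    (hd : 2 ≤ d) (hdk : d ≤ 2 * k) (hde : Even d)
    (hkΔ : k ≤ Δ) (hΔn : Δ < n)
    (F : Type*) [Field F] [Fintype F] (hF : Fintype.card F = q)
    (h : ∃ C : Finset (Submodule F (Fin (n - Δ) → F)),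
      C.card = N ∧
      (∀ U ∈ C, Module.finrank F ↥U = k) ∧
      (∀ U ∈ C, ∀ W ∈ C, U ≠ W → d ≤ subspaceDist F U W)) :
    ∃ C : Finset (Submodule F (Fin n → F)),
      C.card = q ^ (Δ * (k - d / 2 + 1)) * N ∧
      (∀ U ∈ C, Module.finrank F ↥U = k) ∧
      (∀ U ∈ C, ∀ W ∈ C, U ≠ W → d ≤ subspaceDist F U W) ∧
      (∀ U ∈ C, projDim F U (n - Δ) = k) :=
  statement5_general q n k d Δ N hd hdk hde hkΔ hΔn F hF h
end

section
/- Let m, n be integers with 1 ≤ m ≤ n and n − m ≥ 4. Let 𝒮 ⊆ 𝔽_2^n be a set of binary vectors, each of Hamming weight 4 and having at most 2 ones among the first m coordinates, such that the Hamming distance between any two distinct elements of 𝒮 is at least 4. Suppose A is an integer such that every set of binary vectors of length n − m, each of Hamming weight 4 and pairwise Hamming distance at least 4, has cardinality at most A. Then #𝒮 ≤ ⌊ m(n−m)(n−m−1)/4 ⌋ + A; more precisely, the number of elements of 𝒮 with at least one 1 among the first m coordinates is at most ⌊ m(n−m)(n−m−1)/4 ⌋, and the number of elements of 𝒮 with no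 1 among the first m coordinates is at most A. -/
/-!
Codewords with no ones among the first `m` coordinates all agree there, so deleting those
coordinates is an isometry on them and yields a code of length `n - m` with the same parameters:
there are at most `A` of them.

For the others, call the first `m` coordinates the head and the rest the tail. A codeword with
`a ∈ {1, 2}` ones in the head contains `a * C(4 - a, 2) ≥ 2` triples of ones made of one head and
two tail coordinates. Distinct codewords share at most two ones, as their distance is at least `4`,
so no triple lies in two codewords; and there are at most `m * C(n - m, 2)` such triples.
-/

/-- The number of ones of a binary vector `v ∈ 𝔽₂ⁿ` among its first `m` coordinates. -/
def onesAmongFirst {n : ℕ} (m : ℕ) (v : Fin n → Bool) : ℕ :=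
  (Finset.univ.filter fun i : Fin n => (i : ℕ) < m ∧ v i = true).card

open Finset

section Ones

variable {ι : Type*} [Fintype ι]

def ones (v : ι → Bool) : Finset ι := {i | v i = true}

@[simp]
lemma mem_ones {v : ι → Bool} {i : ι} : i ∈ ones v ↔ v i = true := by
  simp [ones]

lemma hammingDist_false_right (v : ι → Bool) : hammingDist v (fun _ => false) = #(ones v) := by
  simp [hammingDist, ones]

variable [DecidableEq ι]

lemma hammingDist_add_two_mul_card_inter_ones (v w : ι → Bool) :
    hammingDist v w + 2 * #(ones v ∩ ones w) = #(ones v) + #(ones w) := by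
  have hdiff : ({i | v i ≠ w i} : Finset ι) = (ones v \ ones w) ∪ (ones w \ ones v) := by
    ext i
    cases hv : v i <;> cases hw : w i <;> simp [hv, hw]
  have hv := card_sdiff_add_card_inter (ones v) (ones w)
  have hw := card_sdiff_add_card_inter (ones w) (ones v)
  rw [inter_comm] at hw
  rw [hammingDist, hdiff, card_union_of_disjoint disjoint_sdiff_sdiff]
  omega

lemma card_inter_ones_le_two {v w : ι → Bool} (hv : #(ones v) = 4) (hw : #(ones w) = 4)
    (hvw : 4 ≤ hammingDist v w) : #(ones v ∩ ones w) ≤ 2 := by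
  have := hammingDist_add_two_mul_card_inter_ones v w
  omega

def headTailTriples (H : Finset ι) (v : ι → Bool) : Finset (ι × Finset ι) :=
  (ones v ∩ H) ×ˢ (ones v \ H).powersetCard 2

variable {H : Finset ι}

lemma headTailTriples_subset (v : ι → Bool) :
    headTailTriples H v ⊆ H ×ˢ Hᶜ.powersetCard 2 :=
  product_subset_product inter_subset_right
    (powersetCard_mono fun _ hi => mem_compl.2 (mem_sdiff.1 hi).2)

lemma disjoint_headTailTriples {v w : ι → Bool} (hvw : #(ones v ∩ ones w) ≤ 2) :
    Disjoint (headTailTriples H v) (headTailTriples H w) := by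
  rw [disjoint_left]
  rintro ⟨i, e⟩ hv hw
  simp only [headTailTriples, mem_product, mem_powersetCard, mem_inter] at hv hw
  obtain ⟨⟨hiv, hiH⟩, hev, he⟩ := hv
  obtain ⟨⟨hiw, -⟩, hew, -⟩ := hw
  have hie : i ∉ e := fun hi => (mem_sdiff.1 (hev hi)).2 hiH
  have hshared : insert i e ⊆ ones v ∩ ones w := by
    refine insert_subset (mem_inter.2 ⟨hiv, hiw⟩) fun j hj => ?_
    exact mem_inter.2 ⟨(mem_sdiff.1 (hev hj)).1, (mem_sdiff.1 (hew hj)).1⟩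
  have := card_le_card hshared
  rw [card_insert_of_notMem hie, he] at this
  omega

lemma two_le_card_headTailTriples {v : ι → Bool} (hv : #(ones v) = 4)
    (hH : #(ones v ∩ H) ∈ Icc 1 2) : 2 ≤ #(headTailTriples H v) := by
  have hsplit := card_inter_add_card_sdiff (ones v) H
  rw [headTailTriples, card_product, card_powersetCard, show #(ones v \ H) = 4 - #(ones v ∩ H) by
    omega]
  obtain ⟨h1, h2⟩ := mem_Icc.1 hH
  interval_cases #(ones v ∩ H) <;> decide

theorem two_mul_card_le_mul_choose_two (S : Finset (ι → Bool)) (hwt : ∀ v ∈ S, #(ones v) = 4)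
    (hH : ∀ v ∈ S, #(ones v ∩ H) ∈ Icc 1 2)
    (hinter : ∀ v ∈ S, ∀ w ∈ S, v ≠ w → #(ones v ∩ ones w) ≤ 2) :
    2 * #S ≤ #H * (Fintype.card ι - #H).choose 2 :=
  calc 2 * #S = #S • 2 := by rw [smul_eq_mul, mul_comm]
    _ ≤ ∑ v ∈ S, #(headTailTriples H v) :=
      card_nsmul_le_sum _ _ _ fun v hv => two_le_card_headTailTriples (hwt v hv) (hH v hv)
    _ = #(S.biUnion (headTailTriples H)) :=
      (card_biUnion fun v hv w hw hvw => disjoint_headTailTriples (hinter v hv w hw hvw)).symm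
    _ ≤ #(H ×ˢ Hᶜ.powersetCard 2) :=
      card_le_card (biUnion_subset.2 fun v _ => headTailTriples_subset v)
    _ = #H * (Fintype.card ι - #H).choose 2 := by
      rw [card_product, card_powersetCard, card_compl]

end Ones

lemma le_mul_mul_pred_div_four {s m k : ℕ} (h : 2 * s ≤ m * k.choose 2) :
    s ≤ m * k * (k - 1) / 4 := by
  have hk : k.choose 2 * 2 = k * (k - 1) := by
    rw [Nat.choose_two_right, Nat.div_two_mul_two_of_even (Nat.even_mul_pred_self k)]
  rw [Nat.le_div_iff_mul_le (by norm_num), mul_assoc, ← hk]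
  linarith

section Fin

variable {n : ℕ}

def dropFirst {α : Type*} (m : ℕ) (v : Fin n → α) : Fin (n - m) → α :=
  fun i => v ⟨m + i, by omega⟩

lemma hammingDist_dropFirst {α : Type*} [DecidableEq α] {m : ℕ} {v w : Fin n → α}
    (h : ∀ i : Fin n, (i : ℕ) < m → v i = w i) :
    hammingDist (dropFirst m v) (dropFirst m w) = hammingDist v w := by
  refine card_bij (fun i _ => (⟨m + i, by omega⟩ : Fin n))
    (fun i hi => mem_filter.2 ⟨mem_univ _, (mem_filter.1 hi).2⟩)
    (fun i _ j _ hij => Fin.ext (by simpa using hij)) fun j hj => ?_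
  have hmj : m ≤ (j : ℕ) := by
    by_contra hlt
    exact (mem_filter.1 hj).2 (h j (by omega))
  have hj' : (⟨m + (j - m), by omega⟩ : Fin n) = j := Fin.ext (by simp only; omega)
  exact ⟨⟨j - m, by omega⟩, mem_filter.2 ⟨mem_univ _, by simpa [dropFirst, hj'] using hj⟩, hj'⟩

lemma onesAmongFirst_eq_zero_iff {m : ℕ} {v : Fin n → Bool} :
    onesAmongFirst m v = 0 ↔ ∀ i : Fin n, (i : ℕ) < m → v i = false := by
  simp [onesAmongFirst, filter_eq_empty_iff]

lemma onesAmongFirst_eq_card_inter (m : ℕ) (v : Fin n → Bool) :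
    onesAmongFirst m v = #(ones v ∩ ({i | (i : ℕ) < m} : Finset (Fin n))) := by
  rw [onesAmongFirst]
  congr 1
  ext i
  simp [and_comm]

theorem card_le_of_forall_onesAmongFirst_eq_zero {m k d A : ℕ} (S : Finset (Fin n → Bool))
    (hzero : ∀ v ∈ S, onesAmongFirst m v = 0)
    (hwt : ∀ v ∈ S, hammingDist v (fun _ => false) = k)
    (hdist : ∀ v ∈ S, ∀ w ∈ S, v ≠ w → d ≤ hammingDist v w)
    (hA : ∀ T : Finset (Fin (n - m) → Bool),
      (∀ v ∈ T, hammingDist v (fun _ => false) = k) →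
      (∀ v ∈ T, ∀ w ∈ T, v ≠ w → d ≤ hammingDist v w) → #T ≤ A) :
    #S ≤ A := by
  have hiso {v w : Fin n → Bool} (hv : onesAmongFirst m v = 0) (hw : onesAmongFirst m w = 0) :
      hammingDist (dropFirst m v) (dropFirst m w) = hammingDist v w := by
    rw [onesAmongFirst_eq_zero_iff] at hv hw
    exact hammingDist_dropFirst fun i hi => (hv i hi).trans (hw i hi).symm
  have hzero_false : onesAmongFirst m (fun _ : Fin n => false) = 0 :=
    onesAmongFirst_eq_zero_iff.2 fun _ _ => rfl
  rw [← card_image_of_injOn (f := dropFirst m) fun v hv w hw h => eq_of_hammingDist_eq_zero <| by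
    rw [← hiso (hzero v hv) (hzero w hw), h, hammingDist_self]]
  refine hA _ (forall_mem_image.2 fun v hv => ?_)
    (forall_mem_image.2 fun v hv => forall_mem_image.2 fun w hw hvw => ?_)
  · exact (hiso (hzero v hv) hzero_false).trans (hwt v hv)
  · rw [hiso (hzero v hv) (hzero w hw)]
    exact hdist v hv w hw fun h => hvw (h ▸ rfl)

theorem card_le_of_onesAmongFirst_mem_Icc {m : ℕ} (S : Finset (Fin n → Bool))
    (hwt : ∀ v ∈ S, #(ones v) = 4) (hhead : ∀ v ∈ S, onesAmongFirst m v ∈ Icc 1 2)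
    (hdist : ∀ v ∈ S, ∀ w ∈ S, v ≠ w → 4 ≤ hammingDist v w) :
    #S ≤ m * (n - m) * (n - m - 1) / 4 := by
  apply le_mul_mul_pred_div_four
  calc 2 * #S ≤ #{i : Fin n | (i : ℕ) < m} *
        (Fintype.card (Fin n) - #{i : Fin n | (i : ℕ) < m}).choose 2 :=
      two_mul_card_le_mul_choose_two S hwt
        (fun v hv => onesAmongFirst_eq_card_inter m v ▸ hhead v hv)
        fun v hv w hw hvw => card_inter_ones_le_two (hwt v hv) (hwt w hw) (hdist v hv w hw hvw)
    _ ≤ m * (n - m).choose 2 := by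
      rw [Fin.card_filter_val_lt, Fintype.card_fin, show n - min n m = n - m by omega]
      gcongr
      exact min_le_right n m

end Fin

theorem statement16_general (n m : ℕ)
    (S : Finset (Fin n → Bool))
    (hwt : ∀ v ∈ S, hammingDist v (fun _ => false) = 4)
    (hfirst : ∀ v ∈ S, onesAmongFirst m v ≤ 2)
    (hdist : ∀ v ∈ S, ∀ w ∈ S, v ≠ w → 4 ≤ hammingDist v w)
    (A : ℕ)
    (hA : ∀ T : Finset (Fin (n - m) → Bool),
      (∀ v ∈ T, hammingDist v (fun _ => false) = 4) →
      (∀ v ∈ T, ∀ w ∈ T, v ≠ w → 4 ≤ hammingDist v w) →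
      T.card ≤ A) :
    S.card ≤ m * (n - m) * (n - m - 1) / 4 + A ∧
    (S.filter fun v => 1 ≤ onesAmongFirst m v).card ≤ m * (n - m) * (n - m - 1) / 4 ∧
    (S.filter fun v => onesAmongFirst m v = 0).card ≤ A := by
  have hS₁ : #{v ∈ S | 1 ≤ onesAmongFirst m v} ≤ m * (n - m) * (n - m - 1) / 4 :=
    card_le_of_onesAmongFirst_mem_Icc _
      (fun v hv => hammingDist_false_right v ▸ hwt v (mem_filter.1 hv).1)
      (fun v hv => mem_Icc.2 ⟨(mem_filter.1 hv).2, hfirst v (mem_filter.1 hv).1⟩)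
      fun v hv w hw => hdist v (mem_filter.1 hv).1 w (mem_filter.1 hw).1
  have hS₀ : #{v ∈ S | onesAmongFirst m v = 0} ≤ A :=
    card_le_of_forall_onesAmongFirst_eq_zero _ (fun v hv => (mem_filter.1 hv).2)
      (fun v hv => hwt v (mem_filter.1 hv).1)
      (fun v hv w hw => hdist v (mem_filter.1 hv).1 w (mem_filter.1 hw).1) hA
  have hsplit : #{v ∈ S | 1 ≤ onesAmongFirst m v} + #{v ∈ S | onesAmongFirst m v = 0} = #S := by
    simpa [Nat.lt_one_iff] using card_filter_add_card_filter_not (s := S) (1 ≤ onesAmongFirst m ·)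
  exact ⟨by omega, hS₁, hS₀⟩

theorem statement16 (n m : ℕ) (hm : 1 ≤ m) (hmn : m ≤ n) (h4 : 4 ≤ n - m)
    (S : Finset (Fin n → Bool))
    (hwt : ∀ v ∈ S, hammingDist v (fun _ => false) = 4)
    (hfirst : ∀ v ∈ S, onesAmongFirst m v ≤ 2)
    (hdist : ∀ v ∈ S, ∀ w ∈ S, v ≠ w → 4 ≤ hammingDist v w)
    (A : ℕ)
    (hA : ∀ T : Finset (Fin (n - m) → Bool),
      (∀ v ∈ T, hammingDist v (fun _ => false) = 4) →
      (∀ v ∈ T, ∀ w ∈ T, v ≠ w → 4 ≤ hammingDist v w) →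
      T.card ≤ A) :
    S.card ≤ m * (n - m) * (n - m - 1) / 4 + A ∧
    (S.filter fun v => 1 ≤ onesAmongFirst m v).card ≤ m * (n - m) * (n - m - 1) / 4 ∧
    (S.filter fun v => onesAmongFirst m v = 0).card ≤ A :=
  statement16_general n m S hwt hfirst hdist A hA
end
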